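/- Let X be a metric space. The relation ≍_f on subsets of X, defined by A ≍_f B iff there do not exist A' ⊇ A and B' ⊇ B with A' ∪ B' = X and ¬(A' ≍ B'), is a large-scale proximity relation on X. -/

import Mathlib

open Topology

/-- A subset `E ⊆ X × X` is an entourage if `sup_{(x,y) ∈ E} d(x,y) < ∞`. -/
def IsEntourage {X : Type*} [MetricSpace X] (E : Set (X × X)) : Prop :=
  ∃ C : ℝ, ∀ p ∈ E, dist p.1 p.2 ≤ C

/-- `E[S] = {x | ∃ y ∈ S, (x,y) ∈ E}`. -/
def EImage {X : Type*} (E : Set (X × X)) (S : Set X) : Set X :=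
  {x | ∃ y ∈ S, (x, y) ∈ E}

/-- Subsets `A, B` are close (`A ≍ B`): there are `R ≥ 0` and a sequence
`(aₙ, bₙ) ∈ A × B` with `d(aₙ, bₙ) ≤ R` and `{aₙ}` unbounded. -/
def Close {X : Type*} [MetricSpace X] (A B : Set X) : Prop :=
  ∃ R : ℝ, 0 ≤ R ∧ ∃ a b : ℕ → X, (∀ n, a n ∈ A) ∧ (∀ n, b n ∈ B) ∧
    (∀ n, dist (a n) (b n) ≤ R) ∧ ¬ Bornology.IsBounded (Set.range a)

/-- `A ≍_f B` iff there do not exist `A' ⊇ A`, `B' ⊇ B` with `A' ∪ B' = X` and `¬(A' ≍ B')`. -/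
def CloseF {X : Type*} [MetricSpace X] (A B : Set X) : Prop :=
  ¬ ∃ A' B' : Set X, A ⊆ A' ∧ B ⊆ B' ∧ A' ∪ B' = Set.univ ∧ ¬ Close A' B'

/-- A large-scale proximity relation. -/
structure IsLSP {X : Type*} [MetricSpace X] (r : Set X → Set X → Prop) : Prop where
  not_self_iff_bounded : ∀ B : Set X, (¬ r B B) ↔ Bornology.IsBounded B
  symm : ∀ A B : Set X, r A B → r B A
  entourage_invariant : ∀ (A A' : Set X) (E : Set (X × X)), IsEntourage E →
    A' ⊆ EImage E A → A ⊆ EImage E A' → ∀ B : Set X, r A B → r A' B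
  union_iff : ∀ A B C : Set X, r (A ∪ B) C ↔ (r A C ∨ r B C)
  separation : ∀ A B : Set X, ¬ r A B →
    ∃ C D : Set X, C ∪ D = Set.univ ∧ ¬ r C A ∧ ¬ r D B

/-- An `r`-ultrafilter on `X`. -/
def IsRUltrafilter {X : Type*} (r : Set X → Set X → Prop) (F : Set (Set X)) : Prop :=
  (∀ A ∈ F, ∀ B ∈ F, r A B) ∧ (∀ A B : Set X, A ∪ B ∈ F → A ∈ F ∨ B ∈ F) ∧ Set.univ ∈ F

/-- A compactification `i : X → X̄` is coarse if for every entourage `E`, the closure of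
`(i × i)(E)` meets `(∂X × X̄) ∪ (X̄ × ∂X)` only inside the diagonal over `∂X = X̄ ∖ i(X)`. -/
def IsCoarseCompactification {X Xb : Type*} [MetricSpace X] [TopologicalSpace Xb]
    (i : X → Xb) : Prop :=
  ∀ E : Set (X × X), IsEntourage E →
    closure ((fun p : X × X => (i p.1, i p.2)) '' E) ∩
      (((Set.range i)ᶜ ×ˢ (Set.univ : Set Xb)) ∪ ((Set.univ : Set Xb) ×ˢ (Set.range i)ᶜ)) ⊆
      {q : Xb × Xb | q.1 = q.2 ∧ q.1 ∈ (Set.range i)ᶜ}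

/-- A Higson function: bounded, continuous, and for every entourage `E` and `ε > 0`
there is a bounded set `B` outside of which the variation on `E` is `< ε`. -/
def IsHigson {X : Type*} [MetricSpace X] (φ : X → ℝ) : Prop :=
  Continuous φ ∧ (∃ C : ℝ, ∀ x, |φ x| ≤ C) ∧
  ∀ E : Set (X × X), IsEntourage E → ∀ ε > (0:ℝ), ∃ B : Set X, Bornology.IsBounded B ∧
    ∀ p ∈ E, (p.1 ∉ B ∨ p.2 ∉ B) → |φ p.1 - φ p.2| < ε

/-- A coarse map: coarsely uniform and coarsely proper. -/
def IsCoarseMap {X Y : Type*} [MetricSpace X] [MetricSpace Y] (f : X → Y) : Prop :=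
  (∀ E : Set (X × X), IsEntourage E →
    IsEntourage ((fun p : X × X => (f p.1, f p.2)) '' E)) ∧
  (∀ S : Set Y, Bornology.IsBounded S → Bornology.IsBounded (f ⁻¹' S))

/-- The Gromov product `(x|y)_w`. -/
noncomputable def gromovProd {X : Type*} [MetricSpace X] (w x y : X) : ℝ :=
  (dist x w + dist y w - dist x y) / 2

/-- `X` is a geodesic metric space. -/
def IsGeodesicSpace (X : Type*) [MetricSpace X] : Prop :=
  ∀ x y : X, ∃ γ : ℝ → X, γ 0 = x ∧ γ (dist x y) = y ∧
    ∀ s ∈ Set.Icc (0:ℝ) (dist x y), ∀ t ∈ Set.Icc (0:ℝ) (dist x y),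
      dist (γ s) (γ t) = |s - t|

/-! A pair is close exactly when, for some `R`, the points of `A` within `R` of `B` form an
unbounded set. In that form closeness is symmetric, monotone, splits over unions and survives
moving a set a bounded distance. Each axiom for `≍_f` then comes from choosing the covering pair
well: to move `A` to a nearby `A'`, replace a cover `P ∪ Q` adapted to `A'` by `(P ∪ A) ∪ Q`;
for a union `A₁ ∪ A₂`, take the union of the first and the intersection of the second parts of
the two covers. -/

open Bornology Metric

section PseudoMetric

variable {X : Type*} [PseudoMetricSpace X]

lemma Bornology.IsBounded.of_forall_exists_dist_le {S T : Set X} {C : ℝ} (hT : IsBounded T)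
    (h : ∀ x ∈ S, ∃ y ∈ T, dist x y ≤ C) : IsBounded S :=
  hT.cthickening.subset fun x hx =>
    let ⟨y, hy, hxy⟩ := h x hx
    mem_cthickening_of_dist_le x y C T hy hxy

lemma exists_seq_mem_not_isBounded_range {S : Set X} (hS : ¬IsBounded S) :
    ∃ a : ℕ → X, (∀ n, a n ∈ S) ∧ ¬IsBounded (Set.range a) := by
  obtain ⟨x₀, -⟩ := Bornology.nonempty_of_not_isBounded hS
  have hfar : ∀ n : ℕ, ∃ y ∈ S, (n : ℝ) < dist y x₀ := fun n => by
    by_contra! hnear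
    exact hS (isBounded_closedBall.subset fun y hy => mem_closedBall.2 (hnear y hy))
  choose a ha hfar using hfar
  refine ⟨a, ha, fun hb => ?_⟩
  obtain ⟨r, hr⟩ := hb.subset_closedBall x₀
  obtain ⟨n, hn⟩ := exists_nat_gt r
  exact (hfar n).not_ge (hn.le.trans' (mem_closedBall.1 (hr ⟨n, rfl⟩)))

end PseudoMetric

section MetricSpace

variable {X : Type*} [MetricSpace X] {A A' B B' : Set X}

lemma close_iff : Close A B ↔ ∃ R : ℝ, ¬IsBounded {a ∈ A | ∃ b ∈ B, dist a b ≤ R} := by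
  constructor
  · rintro ⟨R, -, a, b, ha, hb, hab, hunb⟩
    refine ⟨R, fun hbdd => hunb (hbdd.subset ?_)⟩
    exact Set.range_subset_iff.2 fun n => ⟨ha n, b n, hb n, hab n⟩
  · rintro ⟨R, hunb⟩
    obtain ⟨a, ha, ha_unb⟩ := exists_seq_mem_not_isBounded_range hunb
    choose haA b hb hab using ha
    exact ⟨R, dist_nonneg.trans (hab 0), a, b, haA, hb, hab, ha_unb⟩

lemma Close.symm (h : Close A B) : Close B A := by
  obtain ⟨R, hunb⟩ := close_iff.1 h
  refine close_iff.2 ⟨R, fun hbdd => hunb <| hbdd.of_forall_exists_dist_le (C := R) fun a ha => ?_⟩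
  obtain ⟨b, hb, hab⟩ := ha.2
  exact ⟨b, ⟨hb, a, ha.1, dist_comm a b ▸ hab⟩, hab⟩

lemma Close.mono (h : Close A B) (hA : A ⊆ A') (hB : B ⊆ B') : Close A' B' := by
  obtain ⟨R, hR, a, b, ha, hb, hab, hunb⟩ := h
  exact ⟨R, hR, a, b, fun n => hA (ha n), fun n => hB (hb n), hab, hunb⟩

lemma close_union_left_iff : Close (A ∪ A') B ↔ Close A B ∨ Close A' B := by
  refine ⟨fun h => ?_, fun h => h.elim (·.mono Set.subset_union_left subset_rfl)
    (·.mono Set.subset_union_right subset_rfl)⟩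
  obtain ⟨R, hunb⟩ := close_iff.1 h
  simp only [Set.mem_union, or_and_right, Set.ofPred_or, isBounded_union, not_and_or] at hunb
  exact hunb.imp (fun h => close_iff.2 ⟨R, h⟩) (fun h => close_iff.2 ⟨R, h⟩)

lemma Close.of_forall_exists_dist_le {c : ℝ} (h : Close A B)
    (hA : ∀ x ∈ A, ∃ y ∈ A', dist x y ≤ c) : Close A' B := by
  obtain ⟨R, hunb⟩ := close_iff.1 h
  refine close_iff.2 ⟨c + R, fun hbdd =>
    hunb <| hbdd.of_forall_exists_dist_le (C := c) fun x hx => ?_⟩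
  obtain ⟨y, hy, hxy⟩ := hA x hx.1
  obtain ⟨b, hb, hxb⟩ := hx.2
  refine ⟨y, ⟨hy, b, hb, ?_⟩, hxy⟩
  calc dist y b ≤ dist y x + dist x b := dist_triangle y x b
    _ ≤ c + R := add_le_add (dist_comm x y ▸ hxy) hxb

lemma close_self (hB : ¬IsBounded B) : Close B B :=
  close_iff.2 ⟨0, fun hbdd => hB (hbdd.subset fun b hb => ⟨hb, b, hb, (dist_self b).le⟩)⟩

lemma not_close_of_isBounded_right (hB : IsBounded B) : ¬Close A B := fun h =>
  let ⟨_, hunb⟩ := close_iff.1 h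
  hunb (hB.of_forall_exists_dist_le fun _ ha => ha.2)

lemma not_closeF_iff : ¬CloseF A B ↔
    ∃ A' B' : Set X, A ⊆ A' ∧ B ⊆ B' ∧ A' ∪ B' = Set.univ ∧ ¬Close A' B' :=
  not_not

lemma not_closeF_self_iff : ¬CloseF B B ↔ IsBounded B := by
  refine ⟨fun h => ?_, fun hB => not_closeF_iff.2
    ⟨Set.univ, B, Set.subset_univ B, subset_rfl, Set.univ_union B,
      not_close_of_isBounded_right hB⟩⟩
  obtain ⟨A', B', hA', hB', -, hnc⟩ := not_closeF_iff.1 h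
  by_contra hB
  exact hnc ((close_self hB).mono hA' hB')

lemma CloseF.symm (h : CloseF A B) : CloseF B A := by
  rintro ⟨B', A', hB', hA', hcov, hnc⟩
  exact h ⟨A', B', hA', hB', Set.union_comm A' B' ▸ hcov, fun hc => hnc hc.symm⟩

lemma CloseF.mono (h : CloseF A B) (hA : A ⊆ A') (hB : B ⊆ B') : CloseF A' B' := by
  rintro ⟨A'', B'', hA', hB', hcov, hnc⟩
  exact h ⟨A'', B'', hA.trans hA', hB.trans hB', hcov, hnc⟩

lemma CloseF.of_forall_exists_dist_le {c : ℝ} (h : CloseF A B)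
    (hA : ∀ x ∈ A, ∃ y ∈ A', dist x y ≤ c) : CloseF A' B := by
  rintro ⟨P, Q, hP, hQ, hcov, hnc⟩
  refine h ⟨P ∪ A, Q, Set.subset_union_right, hQ, ?_, fun hc => ?_⟩
  · rw [Set.union_right_comm, hcov, Set.univ_union]
  · rcases close_union_left_iff.1 hc with hPQ | hAQ
    · exact hnc hPQ
    · exact hnc ((hAQ.of_forall_exists_dist_le hA).mono hP subset_rfl)

lemma closeF_union_left_iff : CloseF (A ∪ A') B ↔ CloseF A B ∨ CloseF A' B := by
  refine ⟨fun h => ?_, fun h => h.elim (·.mono Set.subset_union_left subset_rfl)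
    (·.mono Set.subset_union_right subset_rfl)⟩
  by_contra! ⟨h₁, h₂⟩
  obtain ⟨P₁, Q₁, hP₁, hQ₁, hcov₁, hnc₁⟩ := not_closeF_iff.1 h₁
  obtain ⟨P₂, Q₂, hP₂, hQ₂, hcov₂, hnc₂⟩ := not_closeF_iff.1 h₂
  refine h ⟨P₁ ∪ P₂, Q₁ ∩ Q₂, Set.union_subset_union hP₁ hP₂, Set.subset_inter hQ₁ hQ₂, ?_,
    fun hc => ?_⟩
  · refine Set.eq_univ_of_forall fun x => ?_
    have hx₁ : x ∈ P₁ ∪ Q₁ := hcov₁ ▸ Set.mem_univ x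
    have hx₂ : x ∈ P₂ ∪ Q₂ := hcov₂ ▸ Set.mem_univ x
    simp only [Set.mem_union, Set.mem_inter_iff] at hx₁ hx₂ ⊢
    tauto
  · rcases close_union_left_iff.1 hc with hc₁ | hc₂
    · exact hnc₁ (hc₁.mono subset_rfl Set.inter_subset_left)
    · exact hnc₂ (hc₂.mono subset_rfl Set.inter_subset_right)

lemma exists_cover_not_closeF (h : ¬CloseF A B) :
    ∃ C D : Set X, C ∪ D = Set.univ ∧ ¬CloseF C A ∧ ¬CloseF D B := by
  obtain ⟨A', B', hA', hB', hcov, hnc⟩ := not_closeF_iff.1 h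
  have hcov' : B' ∪ A' = Set.univ := Set.union_comm A' B' ▸ hcov
  exact ⟨B', A', hcov', not_closeF_iff.2 ⟨B', A', subset_rfl, hA', hcov', fun hc => hnc hc.symm⟩,
    not_closeF_iff.2 ⟨A', B', subset_rfl, hB', hcov, hnc⟩⟩

end MetricSpace

/-- the relation `≍_f` is a large-scale proximity relation. -/
theorem closeF_isLSP {X : Type*} [MetricSpace X] :
    IsLSP (fun A B : Set X => CloseF A B) where
  not_self_iff_bounded _ := not_closeF_self_iff
  symm _ _ h := h.symm
  entourage_invariant _ _ _ := fun ⟨_, hc⟩ _ hA _ h =>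
    h.of_forall_exists_dist_le fun _ hx =>
      let ⟨y, hy, hxy⟩ := hA hx
      ⟨y, hy, hc _ hxy⟩
  union_iff _ _ _ := closeF_union_left_iff
  separation _ _ := exists_cover_not_closeF
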